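/- Let R = (1−z²)^{-2} Π_{k≥1} (1−z^{2k+2})^{-3} ∈ ℤ[[z]] and let G_d = (1−z²)^{-2} Π_{k=3}^{d−1} (1−z^{2(k−1)})^{-3} ∈ ℤ[[z]] for d ≥ 5. Then the coefficients of z^{2i} in R and in G_d agree for all i ≤ d−2, the coefficient of z^{2(d−1)} in G_d is 3 less than that in R, and the coefficient of z^{2d} in G_d is 9 less than that in R. -/

import Mathlib

/-!
For `d ≥ 3` the series `R` is `G_d` times `(1−z^{2d−2})^{-3}(1−z^{2d})^{-3}(1−z^{2d+2})^{-3}`,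
and modulo `z^{2d+1}` this extra factor is `1 + 3z^{2d−2} + 3z^{2d}`.  So for `n ≤ 2d` the
coefficient `r_n` of `R` is `g_n + 3g_{n−2d+2} + 3g_{n−2d}` in terms of those of `G_d`, and
`g_0 = 1`, `g_2 = 2` give the differences `3` and `3·2 + 3 = 9`.
Congruences modulo `z^N` are written as divisibility by `X ^ N`.
-/

open PowerSeries

/-- The geometric series `(1 − z^a)^{-1} = Σ_{l≥0} z^{al}` in `ℤ[[z]]` (for `a ≥ 1`). -/
noncomputable def geomSeries (a : ℕ) : PowerSeries ℤ :=
  PowerSeries.mk fun m => if a ∣ m then 1 else 0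

/-- `R = (1−z²)^{-2} Π_{k≥1}(1−z^{2k+2})^{-3}`, truncated at `k ≤ d` (higher factors do not
affect coefficients of `z^j` for `j ≤ 2d`). -/
noncomputable def Rd (d : ℕ) : PowerSeries ℤ :=
  geomSeries 2 ^ 2 * ∏ k ∈ Finset.Icc 1 d, geomSeries (2 * k + 2) ^ 3

/-- `G_d = (1−z²)^{-2} Π_{k=3}^{d−1}(1−z^{2(k−1)})^{-3}`, the generating series of monomials
in the Pi–Shen generators. -/
noncomputable def Gd (d : ℕ) : PowerSeries ℤ :=
  geomSeries 2 ^ 2 * ∏ k ∈ Finset.Icc 3 (d - 1), geomSeries (2 * (k - 1)) ^ 3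

section LowOrder

variable {R : Type*} [CommRing R] {N : ℕ}

theorem PowerSeries.coeff_eq_of_X_pow_dvd_sub {f g : R⟦X⟧} (hfg : X ^ N ∣ f - g) {n : ℕ}
    (hn : n < N) : coeff n f = coeff n g := by
  rw [← sub_eq_zero, ← map_sub]
  exact X_pow_dvd_iff.mp hfg n hn

@[simp]
theorem PowerSeries.coeff_ofNat_mul (k n : ℕ) [k.AtLeastTwo] (f : R⟦X⟧) :
    coeff n ((no_index (OfNat.ofNat k) : R⟦X⟧) * f) = OfNat.ofNat k * coeff n f := by
  rw [← map_ofNat C k, coeff_C_mul]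

theorem dvd_one_add_pow_three_mul_sub {p u v : R} (hu : p ∣ u ^ 2) (hv : p ∣ v ^ 2)
    (huv : p ∣ u * v) : p ∣ (1 + u) ^ 3 * (1 + v) ^ 3 - (1 + 3 * u + 3 * v) := by
  have expand : (1 + u) ^ 3 * (1 + v) ^ 3 - (1 + 3 * u + 3 * v)
      = 9 * (u * v) + u ^ 2 * ((3 + u) * (1 + v) ^ 3) + v ^ 2 * ((1 + 3 * u) * (3 + v)) := by
    ring
  rw [expand]
  exact ((huv.mul_left 9).add (hu.mul_right _)).add (hv.mul_right _)

theorem dvd_pow_sub_pow_of_dvd_sub {p x y : R} (h : p ∣ x - y) (n : ℕ) : p ∣ x ^ n - y ^ n :=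
  h.trans (sub_dvd_pow_sub_pow x y n)

theorem Finset.dvd_prod_sub_one {ι : Type*} {s : Finset ι} {p : R} {f : ι → R}
    (hf : ∀ i ∈ s, p ∣ f i - 1) : p ∣ ∏ i ∈ s, f i - 1 :=
  Finset.prod_induction f (fun x => p ∣ x - 1)
    (fun x y hx hy => by simpa using dvd_mul_sub_mul hx hy) (by simp) hf

end LowOrder

section GeomSeries

variable {a N : ℕ}

theorem geomSeries_sub_one (ha : 0 < a) : geomSeries a - 1 = X ^ a * geomSeries a := by
  ext m
  rw [map_sub, coeff_X_pow_mul', geomSeries, coeff_mk, coeff_mk, coeff_one]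
  rcases Nat.eq_zero_or_pos m with rfl | hm
  · simp [ha.ne']
  rcases le_or_gt a m with ham | ham
  · have hdvd : a ∣ m - a ↔ a ∣ m := Nat.dvd_sub_iff_left ham dvd_rfl
    simp [ham, hm.ne', hdvd]
  · simp [ham.not_ge, hm.ne', Nat.not_dvd_of_pos_of_lt hm ham]

theorem X_pow_dvd_geomSeries_sub_one (ha : 0 < a) (hN : N ≤ a) :
    X ^ N ∣ geomSeries a - 1 := by
  rw [geomSeries_sub_one ha]
  exact (pow_dvd_pow X hN).mul_right _

theorem X_pow_dvd_geomSeries_sub_one_add_X_pow (ha : 0 < a) (hN : N ≤ 2 * a) :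
    X ^ N ∣ geomSeries a - (1 + X ^ a) := by
  have h : geomSeries a - (1 + X ^ a) = X ^ (2 * a) * geomSeries a := by
    linear_combination (1 + X ^ a) * geomSeries_sub_one ha
  rw [h]
  exact (pow_dvd_pow X hN).mul_right _

theorem X_pow_dvd_geomSeries_cubes_sub {b c : ℕ} (ha : 0 < a) (hb : 0 < b) (hc : 0 < c)
    (hNa : N ≤ 2 * a) (hNb : N ≤ 2 * b) (hNc : N ≤ c) :
    X ^ N ∣ geomSeries a ^ 3 * geomSeries b ^ 3 * geomSeries c ^ 3
      - (1 + 3 * X ^ a + 3 * X ^ b) := by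
  have hlow : X ^ N ∣ (1 + (X : ℤ⟦X⟧) ^ a) ^ 3 * (1 + X ^ b) ^ 3 - (1 + 3 * X ^ a + 3 * X ^ b) :=
    dvd_one_add_pow_three_mul_sub (by rw [← pow_mul]; exact pow_dvd_pow X (by omega))
      (by rw [← pow_mul]; exact pow_dvd_pow X (by omega))
      (by rw [← pow_add]; exact pow_dvd_pow X (by omega))
  have hprod := dvd_mul_sub_mul
    (dvd_mul_sub_mul (dvd_pow_sub_pow_of_dvd_sub (X_pow_dvd_geomSeries_sub_one_add_X_pow ha hNa) 3)
      (dvd_pow_sub_pow_of_dvd_sub (X_pow_dvd_geomSeries_sub_one_add_X_pow hb hNb) 3))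
    (dvd_pow_sub_pow_of_dvd_sub (X_pow_dvd_geomSeries_sub_one hc hNc) 3)
  rw [one_pow, mul_one] at hprod
  simpa only [sub_add_sub_cancel] using dvd_add hprod hlow

end GeomSeries

theorem Rd_eq_Gd_mul {d : ℕ} (hd : 3 ≤ d) :
    Rd d = Gd d * (geomSeries (2 * d - 2) ^ 3 * geomSeries (2 * d) ^ 3
      * geomSeries (2 * d + 2) ^ 3) := by
  obtain ⟨e, rfl⟩ : ∃ e, d = e + 3 := ⟨d - 3, by omega⟩
  have shift : ∏ k ∈ Finset.Icc 3 (e + 3 - 1), geomSeries (2 * (k - 1)) ^ 3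
      = ∏ k ∈ Finset.range e, geomSeries (2 * (1 + k) + 2) ^ 3 := by
    rw [← Finset.Ico_add_one_right_eq_Icc, Finset.prod_Ico_eq_prod_range]
    refine Finset.prod_congr (by congr 1) fun k _ => ?_
    congr 2; omega
  rw [Rd, Gd, shift, ← Finset.Ico_add_one_right_eq_Icc, Finset.prod_Ico_eq_prod_range,
    show e + 3 + 1 - 1 = e + 3 by omega, show 2 * (e + 3) - 2 = 2 * e + 4 by omega,
    Finset.prod_range_succ, Finset.prod_range_succ, Finset.prod_range_succ]
  ring_nf

theorem coeff_Rd {d n : ℕ} (hd : 3 ≤ d) (hn : n ≤ 2 * d) :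
    coeff n (Rd d) = coeff n (Gd d)
      + 3 * (if 2 * d - 2 ≤ n then coeff (n - (2 * d - 2)) (Gd d) else 0)
      + 3 * (if 2 * d ≤ n then coeff (n - 2 * d) (Gd d) else 0) := by
  have hlow := (X_pow_dvd_geomSeries_cubes_sub (N := 2 * d + 1) (a := 2 * d - 2) (b := 2 * d)
    (c := 2 * d + 2) (by omega) (by omega) (by omega) (by omega) (by omega) (by omega)).mul_left
    (Gd d)
  rw [mul_sub] at hlow
  rw [Rd_eq_Gd_mul hd, coeff_eq_of_X_pow_dvd_sub hlow (by omega)]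
  simp [mul_add, mul_left_comm _ (3 : ℤ⟦X⟧), coeff_mul_X_pow']

theorem X_pow_four_dvd_Gd_sub (d : ℕ) : X ^ 4 ∣ Gd d - (1 + 2 * X ^ 2) := by
  have hsq := dvd_pow_sub_pow_of_dvd_sub
    (X_pow_dvd_geomSeries_sub_one_add_X_pow (N := 4) (a := 2) (by norm_num) le_rfl) 2
  have hprod : X ^ 4 ∣ ∏ k ∈ Finset.Icc 3 (d - 1), geomSeries (2 * (k - 1)) ^ 3 - 1 :=
    Finset.dvd_prod_sub_one fun k hk => by
      have hk3 := (Finset.mem_Icc.mp hk).1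
      simpa only [one_pow] using dvd_pow_sub_pow_of_dvd_sub
        (X_pow_dvd_geomSeries_sub_one (N := 4) (a := 2 * (k - 1)) (by omega) (by omega)) 3
  have h := dvd_mul_sub_mul hsq hprod
  rw [mul_one] at h
  convert dvd_add h (dvd_refl (X ^ 4)) using 1
  rw [Gd]
  ring

theorem coeff_zero_Gd (d : ℕ) : coeff 0 (Gd d) = 1 := by
  rw [coeff_eq_of_X_pow_dvd_sub (X_pow_four_dvd_Gd_sub d) (by norm_num)]
  simp

theorem coeff_two_Gd (d : ℕ) : coeff 2 (Gd d) = 2 := by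
  rw [coeff_eq_of_X_pow_dvd_sub (X_pow_four_dvd_Gd_sub d) (by norm_num)]
  simp [coeff_X_pow]

/-- For `d ≥ 5`: the coefficients of `z^{2i}` in `G_d` and `R` agree for
`i ≤ d−2`; the coefficient of `z^{2(d−1)}` in `G_d` is 3 less than in `R`; and the
coefficient of `z^{2d}` in `G_d` is 9 less than in `R`. -/
theorem stmt16 (d : ℕ) (hd : 5 ≤ d) :
    (∀ i : ℕ, i ≤ d - 2 →
      PowerSeries.coeff (R := ℤ) (2 * i) (Gd d) = PowerSeries.coeff (R := ℤ) (2 * i) (Rd d)) ∧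
    PowerSeries.coeff (R := ℤ) (2 * (d - 1)) (Gd d) = PowerSeries.coeff (R := ℤ) (2 * (d - 1)) (Rd d) - 3 ∧
    PowerSeries.coeff (R := ℤ) (2 * d) (Gd d) = PowerSeries.coeff (R := ℤ) (2 * d) (Rd d) - 9 := by
  have hd3 : 3 ≤ d := by omega
  refine ⟨fun i hi => ?_, ?_, ?_⟩
  · rw [coeff_Rd hd3 (by omega), if_neg (by omega), if_neg (by omega)]
    ring
  · rw [coeff_Rd hd3 (by omega), if_pos (by omega), if_neg (by omega),
      show 2 * (d - 1) - (2 * d - 2) = 0 by omega, coeff_zero_Gd]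
    ring
  · rw [coeff_Rd hd3 le_rfl, if_pos (by omega), if_pos le_rfl,
      show 2 * d - (2 * d - 2) = 2 by omega, Nat.sub_self, coeff_zero_Gd, coeff_two_Gd]
    ring
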